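/- Let a = (1 + √10)/6 and Tₙ = {x ∈ ℝⁿ : x₁ > 1/2, ‖x − a·e₁‖ < 1/2, ‖x‖ < 1}. Then vol(Tₙ) ≥ ∫_{1/2 − a}^{a − 1/2} v_{n−1} (1/4 − t²)^{(n−1)/2} dt, where v_{n−1} is the volume of the (n−1)-dimensional unit ball. -/

import Mathlib

/-!
Write `x = (x₀, y)` with `y ∈ ℝⁿ⁻¹`. By Fubini, the open slab `|x₀ - a| < a - 1/2` of the ball of
radius `1/2` about `a e₀` has volume `∫ v_{n-1} (1/4 - t²)^((n-1)/2) dt`, its sections being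
`(n-1)`-balls of radius `√(1/4 - (x₀ - a)²)`. The slab lies in `Tₙ`: on it `x₀ > 1/2`, and
`‖x‖² < 2a x₀ - a² + 1/4 < 1` because `x₀ < 2a - 1/2`, the height at which the spheres `‖x‖ = 1`
and `‖x - a e₀‖ = 1/2` meet (using `3a² - a = 3/4`).
-/

open MeasureTheory Metric

noncomputable def a : ℝ := (1 + Real.sqrt 10) / 6

noncomputable def T (n : ℕ) (hn : 0 < n) : Set (EuclideanSpace ℝ (Fin n)) :=
  {x | x ⟨0, hn⟩ > 1/2 ∧ ‖x - a • EuclideanSpace.single (⟨0, hn⟩ : Fin n) (1 : ℝ)‖ < 1/2 ∧ ‖x‖ < 1}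

lemma one_half_lt_a : 1 / 2 < a := by
  unfold a
  nlinarith [Real.sq_sqrt (show (0 : ℝ) ≤ 10 by norm_num), Real.sqrt_nonneg 10]

lemma a_lt_one : a < 1 := by
  unfold a
  nlinarith [Real.sq_sqrt (show (0 : ℝ) ≤ 10 by norm_num), Real.sqrt_nonneg 10]

lemma three_mul_a_sq_sub_a : 3 * a ^ 2 - a = 3 / 4 := by
  unfold a
  nlinarith [Real.sq_sqrt (show (0 : ℝ) ≤ 10 by norm_num)]

namespace EuclideanSpace

noncomputable def finSuccMeasurableEquiv (m : ℕ) :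
    EuclideanSpace ℝ (Fin (m + 1)) ≃ᵐ ℝ × EuclideanSpace ℝ (Fin m) :=
  (MeasurableEquiv.toLp 2 (Fin (m + 1) → ℝ)).symm.trans
    ((MeasurableEquiv.piFinSuccAbove (fun _ ↦ ℝ) 0).trans
      ((MeasurableEquiv.refl ℝ).prodCongr (MeasurableEquiv.toLp 2 (Fin m → ℝ))))

variable {m : ℕ}

theorem volume_preserving_finSuccMeasurableEquiv :
    MeasurePreserving (finSuccMeasurableEquiv m) :=
  (((MeasurePreserving.id volume).prod
      (volume_preserving_symm_measurableEquiv_toLp (Fin m)).symm).comp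
    (volume_preserving_piFinSuccAbove (fun _ ↦ ℝ) 0)).comp
    (volume_preserving_symm_measurableEquiv_toLp (Fin (m + 1)))

@[simp]
theorem finSuccMeasurableEquiv_fst (x : EuclideanSpace ℝ (Fin (m + 1))) :
    (finSuccMeasurableEquiv m x).1 = x 0 :=
  rfl

@[simp]
theorem finSuccMeasurableEquiv_snd_apply (x : EuclideanSpace ℝ (Fin (m + 1))) (j : Fin m) :
    (finSuccMeasurableEquiv m x).2 j = x j.succ :=
  rfl

theorem norm_sub_smul_single_zero_sq (x : EuclideanSpace ℝ (Fin (m + 1))) (c : ℝ) :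
    ‖x - c • single 0 1‖ ^ 2 = (x 0 - c) ^ 2 + ‖(finSuccMeasurableEquiv m x).2‖ ^ 2 := by
  simp [real_norm_sq_eq, Fin.sum_univ_succ, Fin.succ_ne_zero]

end EuclideanSpace

def ballSlab (m : ℕ) (c r h : ℝ) : Set (ℝ × EuclideanSpace ℝ (Fin m)) :=
  {p | |p.1 - c| < h ∧ (p.1 - c) ^ 2 + ‖p.2‖ ^ 2 < r ^ 2}

section ballSlab

variable {m : ℕ} {c r h t : ℝ}

theorem isOpen_ballSlab : IsOpen (ballSlab m c r h) :=
  (isOpen_lt (continuous_fst.sub continuous_const).abs continuous_const).inter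
    (isOpen_lt (((continuous_fst.sub continuous_const).pow 2).add (continuous_snd.norm.pow 2))
      continuous_const)

theorem sq_sub_sq_pos_of_mem_Ioo (hhr : h ≤ r) (ht : t ∈ Set.Ioo (c - h) (c + h)) :
    0 < r ^ 2 - (t - c) ^ 2 := by
  obtain ⟨hlo, hhi⟩ := ht
  nlinarith

theorem preimage_mk_ballSlab (ht : t ∈ Set.Ioo (c - h) (c + h)) :
    Prod.mk t ⁻¹' ballSlab m c r h = ball 0 √(r ^ 2 - (t - c) ^ 2) := by
  have habs : |t - c| < h := abs_sub_lt_iff.2 ⟨by linarith [ht.2], by linarith [ht.1]⟩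
  ext y
  rw [mem_ball_zero_iff, Real.lt_sqrt (norm_nonneg y)]
  simp only [ballSlab, Set.mem_preimage, Set.mem_ofPred_eq, habs, true_and]
  constructor <;> intro <;> linarith

theorem preimage_mk_ballSlab_of_notMem (ht : t ∉ Set.Ioo (c - h) (c + h)) :
    Prod.mk t ⁻¹' ballSlab m c r h = ∅ :=
  Set.eq_empty_of_forall_notMem fun _ hy ↦
    ht ⟨by linarith [(abs_sub_lt_iff.1 hy.1).2], by linarith [(abs_sub_lt_iff.1 hy.1).1]⟩

theorem volume_preimage_mk_ballSlab (hhr : h ≤ r) (t : ℝ) :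
    volume (Prod.mk t ⁻¹' ballSlab m c r h) =
      (Set.Ioo (c - h) (c + h)).indicator (fun t ↦ ENNReal.ofReal
        ((volume (ball (0 : EuclideanSpace ℝ (Fin m)) 1)).toReal *
          (r ^ 2 - (t - c) ^ 2) ^ ((m : ℝ) / 2))) t := by
  by_cases ht : t ∈ Set.Ioo (c - h) (c + h)
  · have hpos := sq_sub_sq_pos_of_mem_Ioo hhr ht
    rw [Set.indicator_of_mem ht, preimage_mk_ballSlab ht,
      Measure.addHaar_ball_of_pos _ _ (Real.sqrt_pos.2 hpos), finrank_euclideanSpace_fin,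
      Real.rpow_div_two_eq_sqrt _ hpos.le, Real.rpow_natCast, mul_comm,
      ENNReal.ofReal_mul ENNReal.toReal_nonneg, ENNReal.ofReal_toReal measure_ball_lt_top.ne]
  · rw [Set.indicator_of_notMem ht, preimage_mk_ballSlab_of_notMem ht, measure_empty]

theorem volume_ballSlab (hh : 0 ≤ h) (hhr : h ≤ r) :
    volume (ballSlab m c r h) = ENNReal.ofReal (∫ t in -h..h,
      (volume (ball (0 : EuclideanSpace ℝ (Fin m)) 1)).toReal *
        (r ^ 2 - t ^ 2) ^ ((m : ℝ) / 2)) := by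
  set f : ℝ → ℝ := fun t ↦ (volume (ball (0 : EuclideanSpace ℝ (Fin m)) 1)).toReal *
    (r ^ 2 - t ^ 2) ^ ((m : ℝ) / 2)
  have hf : Continuous f :=
    continuous_const.mul ((Real.continuous_rpow_const (by positivity)).comp (by fun_prop))
  have hshift := intervalIntegral.integral_comp_sub_right f c (a := c - h) (b := c + h)
  rw [sub_sub_cancel_left, add_sub_cancel_left] at hshift
  rw [Measure.volume_eq_prod, Measure.prod_apply isOpen_ballSlab.measurableSet]
  simp_rw [volume_preimage_mk_ballSlab hhr]
  rw [lintegral_indicator measurableSet_Ioo, ← hshift, intervalIntegral.integral_of_le (by linarith),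
    integral_Ioc_eq_integral_Ioo, ofReal_integral_eq_lintegral_ofReal]
  · exact (hf.comp (continuous_sub_right c)).integrableOn_Icc.mono_set Set.Ioo_subset_Icc_self
  · filter_upwards [ae_restrict_mem measurableSet_Ioo] with t ht
    exact mul_nonneg ENNReal.toReal_nonneg (Real.rpow_nonneg (sq_sub_sq_pos_of_mem_Ioo hhr ht).le _)

end ballSlab

open EuclideanSpace in
theorem preimage_ballSlab_subset_T (m : ℕ) :
    finSuccMeasurableEquiv m ⁻¹' ballSlab m a (1 / 2) (a - 1 / 2) ⊆ T (m + 1) m.succ_pos := by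
  rintro x ⟨hslab, hball⟩
  simp only [finSuccMeasurableEquiv_fst] at hslab hball
  obtain ⟨hlo, hhi⟩ := abs_sub_lt_iff.1 hslab
  have hdist := norm_sub_smul_single_zero_sq x a
  have hnorm := norm_sub_smul_single_zero_sq x 0
  rw [zero_smul, sub_zero, sub_zero] at hnorm
  change x 0 > 1 / 2 ∧ ‖x - a • single 0 1‖ < 1 / 2 ∧ ‖x‖ < 1
  refine ⟨by linarith, ?_, ?_⟩
  · exact (pow_lt_pow_iff_left₀ (norm_nonneg _) (by norm_num) two_ne_zero).1 (by linarith)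
  · refine (pow_lt_one_iff_of_nonneg (norm_nonneg x) two_ne_zero).1 ?_
    nlinarith [one_half_lt_a, three_mul_a_sq_sub_a]

theorem stmt_10 (n : ℕ) (hn : 2 ≤ n) :
    (volume (T n (by omega))).toReal ≥
      ∫ t in (1/2 - a)..(a - 1/2),
        (volume (ball (0 : EuclideanSpace ℝ (Fin (n - 1))) 1)).toReal *
          (1/4 - t ^ 2) ^ (((n : ℝ) - 1) / 2) := by
  obtain ⟨m, rfl⟩ : ∃ m, n = m + 1 := ⟨n - 1, by omega⟩
  have hT : volume (T (m + 1) m.succ_pos) ≠ ⊤ :=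
    (measure_mono fun x hx ↦ mem_ball_zero_iff.2 hx.2.2).trans_lt measure_ball_lt_top |>.ne
  have hslab : volume (ballSlab m a (1 / 2) (a - 1 / 2)) ≤ volume (T (m + 1) m.succ_pos) := by
    rw [← EuclideanSpace.volume_preserving_finSuccMeasurableEquiv.measure_preimage
      isOpen_ballSlab.measurableSet.nullMeasurableSet]
    exact measure_mono (preimage_ballSlab_subset_T m)
  rw [volume_ballSlab (by linarith [one_half_lt_a]) (by linarith [a_lt_one]),
    ENNReal.ofReal_le_iff_le_toReal hT] at hslab
  convert hslab using 4
  · norm_num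
  · ring
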